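/- arXiv:2312.00463 — 3 statements merged into one kernel-verified Lean document; each statement's English description precedes it below -/
import Mathlib

section
/- Let H be an n×n complex matrix whose numerical range (field of values) is contained in the open left half-plane, i.e., Re(z* H z) < 0 for every unit vector z. Let J be an n×n Hermitian positive semi-definite matrix, and suppose H is invertible. Then every eigenvalue λ of H + H^{-*} J (where H^{-*} denotes the inverse of the conjugate transpose of H) has strictly negative real part. -/
/-!
Left-multiplying `(H + H⁻ᴴ J) x = μ x` by `Hᴴ` gives `(Hᴴ H + J) x = μ Hᴴ x`, hence
`x* (Hᴴ H + J) x = μ · conj c` with `c = x* H x`. The left side is a positive real because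
`Hᴴ H + J` is positive definite, so `μ` is a positive multiple of `c`, and `Re c < 0`.
-/

open Matrix
open scoped ComplexOrder

namespace Complex

lemma re_neg_of_pos_mul_star {μ c : ℂ} (hc : c.re < 0) (h : 0 < μ * star c) : μ.re < 0 := by
  obtain ⟨hre, him⟩ := lt_def.mp h
  simp only [mul_re, mul_im, star_def, conj_re, conj_im, zero_re, zero_im, mul_neg,
    sub_neg_eq_add] at hre him
  have hnormSq : μ.re * (c.re ^ 2 + c.im ^ 2) = (μ.re * c.re + μ.im * c.im) * c.re := by
    linear_combination c.im * him
  have : μ.re * (c.re ^ 2 + c.im ^ 2) < 0 := hnormSq ▸ mul_neg_of_pos_of_neg hre hc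
  exact neg_of_mul_neg_left this (by positivity)

end Complex

namespace Matrix

variable {ι : Type*} [Fintype ι]

lemma exists_mulVec_eq_smul_of_mem_spectrum {K : Type*} [Field K] [DecidableEq ι]
    {A : Matrix ι ι K} {μ : K} (hμ : μ ∈ spectrum K A) : ∃ x ≠ 0, A *ᵥ x = μ • x := by
  rw [spectrum.mem_iff, isUnit_iff_isUnit_det, isUnit_iff_ne_zero, not_not,
    ← exists_mulVec_eq_zero_iff] at hμ
  obtain ⟨x, hx, hAx⟩ := hμ
  refine ⟨x, hx, ?_⟩
  rwa [sub_mulVec, Algebra.algebraMap_eq_smul_one, smul_mulVec, one_mulVec, sub_eq_zero,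
    eq_comm] at hAx

lemma isUnit_of_dotProduct_mulVec_ne_zero {K : Type*} [Field K] [StarRing K] [DecidableEq ι]
    {A : Matrix ι ι K} (hA : ∀ x ≠ 0, star x ⬝ᵥ (A *ᵥ x) ≠ 0) : IsUnit A := by
  rw [isUnit_iff_isUnit_det, isUnit_iff_ne_zero, Ne, ← exists_mulVec_eq_zero_iff]
  rintro ⟨x, hx, hAx⟩
  exact hA x hx (by rw [hAx, dotProduct_zero])

lemma re_dotProduct_mulVec_neg_of_forall_unit {H : Matrix ι ι ℂ}
    (hW : ∀ z : ι → ℂ, star z ⬝ᵥ z = 1 → (star z ⬝ᵥ (H *ᵥ z)).re < 0)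
    {x : ι → ℂ} (hx : x ≠ 0) : (star x ⬝ᵥ (H *ᵥ x)).re < 0 := by
  have hpos : 0 < star x ⬝ᵥ x := dotProduct_star_self_pos_iff.mpr hx
  set s := (star x ⬝ᵥ x).re
  have hs : 0 < s := (Complex.pos_iff.mp hpos).1
  have hsx : star x ⬝ᵥ x = s := Complex.eq_re_of_ofReal_le (r := 0) (by simp [hpos.le])
  set r : ℝ := (Real.sqrt s)⁻¹
  have hr : r ^ 2 * s = 1 := by rw [inv_pow, Real.sq_sqrt hs.le, inv_mul_cancel₀ hs.ne']
  have hunit : star ((r : ℂ) • x) ⬝ᵥ ((r : ℂ) • x) = 1 := by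
    simp only [star_smul, Complex.star_def, Complex.conj_ofReal, dotProduct_smul,
      smul_dotProduct, hsx, smul_eq_mul]
    exact_mod_cast (show r * (r * s) = 1 by linear_combination hr)
  have hneg := hW _ hunit
  simp only [star_smul, Complex.star_def, Complex.conj_ofReal, mulVec_smul, dotProduct_smul,
    smul_dotProduct, smul_eq_mul, Complex.re_ofReal_mul] at hneg
  rw [← mul_assoc] at hneg
  exact neg_of_mul_neg_right hneg (mul_self_nonneg r)

lemma re_neg_of_add_conjTranspose_inv_mul_mulVec_eq_smul [DecidableEq ι] {H J : Matrix ι ι ℂ}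
    (hH : ∀ x ≠ 0, (star x ⬝ᵥ (H *ᵥ x)).re < 0) (hJ : J.PosSemidef)
    {μ : ℂ} {x : ι → ℂ} (hx : x ≠ 0) (hμ : (H + (Hᴴ)⁻¹ * J) *ᵥ x = μ • x) : μ.re < 0 := by
  have hHunit : IsUnit H :=
    isUnit_of_dotProduct_mulVec_ne_zero fun x hx h => by simpa [h] using hH x hx
  have hHx : (Hᴴ * H + J) *ᵥ x = μ • (Hᴴ *ᵥ x) := by
    have hdet : IsUnit Hᴴ.det := (isUnit_iff_isUnit_det _).mp hHunit.star
    rw [← mul_nonsing_inv_cancel_left _ J hdet, ← mul_add, ← mulVec_mulVec, hμ, mulVec_smul]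
  have hposDef : (Hᴴ * H + J).PosDef :=
    (PosDef.conjTranspose_mul_self H (mulVec_injective_iff_isUnit.mpr hHunit)).add_posSemidef hJ
  have hstar : star x ⬝ᵥ (Hᴴ *ᵥ x) = star (star x ⬝ᵥ (H *ᵥ x)) := by
    rw [dotProduct_mulVec, ← star_mulVec, star_dotProduct]
  have hpos := hposDef.dotProduct_mulVec_pos hx
  rw [hHx, dotProduct_smul, hstar] at hpos
  exact Complex.re_neg_of_pos_mul_star (hH x hx) hpos

end Matrix

theorem stmt_0_general (n : ℕ) (H J : Matrix (Fin n) (Fin n) ℂ)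
    (hW : ∀ z : Fin n → ℂ, star z ⬝ᵥ z = 1 → (star z ⬝ᵥ (H *ᵥ z)).re < 0)
    (hJ : J.PosSemidef) :
    ∀ μ ∈ spectrum ℂ (H + (Hᴴ)⁻¹ * J), μ.re < 0 := by
  intro μ hμ
  obtain ⟨x, hx, hμx⟩ := exists_mulVec_eq_smul_of_mem_spectrum hμ
  exact re_neg_of_add_conjTranspose_inv_mul_mulVec_eq_smul
    (fun _ => re_dotProduct_mulVec_neg_of_forall_unit hW) hJ hx hμx

/-- If the numerical range of `H` lies in the open left half-plane, `J` is Hermitian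
positive semi-definite and `H` is invertible, then every eigenvalue of
`H + H^{-*} J` has strictly negative real part. -/
theorem stmt_0 (n : ℕ) (H J : Matrix (Fin n) (Fin n) ℂ)
    (hW : ∀ z : Fin n → ℂ, star z ⬝ᵥ z = 1 → (star z ⬝ᵥ (H *ᵥ z)).re < 0)
    (hJ : J.PosSemidef) (hinv : IsUnit H.det) :
    ∀ μ ∈ spectrum ℂ (H + (Hᴴ)⁻¹ * J), μ.re < 0 :=
  stmt_0_general n H J hW hJ
end

section
/- Let H be an invertible n×n complex matrix, J an n×n complex matrix, and define Ĥ = H ⊗ I + I ⊗ H, M_PMR = (H^{-*}J) ⊗ I + I ⊗ (H^{-*}J), and M_MR = Ĥ^{-*}(J ⊗ I + I ⊗ J), assuming Ĥ is invertible. Then M_PMR = M_MR + Ĥ^{-*}( (H^{-*}J) ⊗ H* + H* ⊗ (H^{-*}J) ). -/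
open Matrix
open scoped Kronecker

private lemma kron_ct {n : ℕ} (A B : Matrix (Fin n) (Fin n) ℂ) :
    (A ⊗ₖ B)ᴴ = Aᴴ ⊗ₖ Bᴴ := by
  ext ⟨i,j⟩ ⟨k,l⟩
  simp [Matrix.conjTranspose_apply, Matrix.kroneckerMap_apply, mul_comm]

/-- Lemma 3.4: `M_PMR = M_MR + Ĥ^{-*}((H^{-*}J) ⊗ H* + H* ⊗ (H^{-*}J))`. -/
theorem stmt_6 (n : ℕ) (H J : Matrix (Fin n) (Fin n) ℂ)
    (hH : IsUnit H.det)
    (Hhat : Matrix (Fin n × Fin n) (Fin n × Fin n) ℂ)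
    (hHhat : Hhat = H ⊗ₖ (1 : Matrix (Fin n) (Fin n) ℂ) + (1 : Matrix (Fin n) (Fin n) ℂ) ⊗ₖ H)
    (hHhatInv : IsUnit Hhat.det)
    (MPMR MMR : Matrix (Fin n × Fin n) (Fin n × Fin n) ℂ)
    (hPMR : MPMR = ((Hᴴ)⁻¹ * J) ⊗ₖ (1 : Matrix (Fin n) (Fin n) ℂ)
        + (1 : Matrix (Fin n) (Fin n) ℂ) ⊗ₖ ((Hᴴ)⁻¹ * J))
    (hMR : MMR = (Hhatᴴ)⁻¹ * (J ⊗ₖ (1 : Matrix (Fin n) (Fin n) ℂ)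
        + (1 : Matrix (Fin n) (Fin n) ℂ) ⊗ₖ J)) :
    MPMR = MMR + (Hhatᴴ)⁻¹ * (((Hᴴ)⁻¹ * J) ⊗ₖ Hᴴ + Hᴴ ⊗ₖ ((Hᴴ)⁻¹ * J)) := by
  set A := (Hᴴ)⁻¹ * J with hA
  have hHc : IsUnit Hᴴ.det := by
    rw [Matrix.det_conjTranspose]; exact hH.star
  have hHhatc : IsUnit Hhatᴴ.det := by
    rw [Matrix.det_conjTranspose]; exact hHhatInv.star
  have hHA : Hᴴ * A = J := Matrix.mul_nonsing_inv_cancel_left _ _ hHc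
  have key : Hhatᴴ * MPMR = (J ⊗ₖ (1 : Matrix (Fin n) (Fin n) ℂ)
      + (1 : Matrix (Fin n) (Fin n) ℂ) ⊗ₖ J) + (A ⊗ₖ Hᴴ + Hᴴ ⊗ₖ A) := by
    rw [hHhat, hPMR]
    simp only [Matrix.conjTranspose_add, kron_ct,
      Matrix.conjTranspose_one, Matrix.add_mul, Matrix.mul_add,
      ← Matrix.mul_kronecker_mul, Matrix.one_mul, Matrix.mul_one, hHA]
    abel
  have := congrArg (fun X => (Hhatᴴ)⁻¹ * X) key
  simp only [Matrix.nonsing_inv_mul_cancel_left _ _ hHhatc] at this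
  rw [this, hMR, ← Matrix.mul_add]
end

section
/- Let H ∈ ℂ^{m×m} be an unreduced upper Hessenberg matrix (H_{j+1,j} ≠ 0 for j < m, H_{ij} = 0 for i > j+1) and let M = M_vec e_m* with M_vec ∈ ℂ^m. Then for every 0 ≤ i ≤ m−1, (H + M)^i e₁ = H^i e₁. -/
/-!
An upper Hessenberg matrix raises the index of the last nonzero entry of a vector by at most one,
so `H ^ k e₁` vanishes at every position after `k`; in particular its last entry vanishes for `k < m`.
The modification `M` only reads the last entry of a vector, so it annihilates every such Krylov
vector, and the powers of `H + M` and of `H` agree on `e₁` up to exponent `m`.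
-/

open Matrix

section Hessenberg

variable {R : Type*} [Semiring R] {n : ℕ} {H : Matrix (Fin n) (Fin n) R}

lemma hessenberg_mulVec_apply_eq_zero (hH : ∀ i j : Fin n, (j : ℕ) + 1 < i → H i j = 0)
    {v : Fin n → R} {p : ℕ} (hv : ∀ i : Fin n, p < i → v i = 0) :
    ∀ i : Fin n, p + 1 < i → (H *ᵥ v) i = 0 := by
  intro i hi
  rw [mulVec, dotProduct]
  refine Finset.sum_eq_zero fun j _ => ?_
  by_cases hj : (j : ℕ) + 1 < i
  · rw [hH i j hj, zero_mul]
  · rw [hv j (by omega), mul_zero]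

lemma hessenberg_pow_mulVec_apply_eq_zero (hH : ∀ i j : Fin n, (j : ℕ) + 1 < i → H i j = 0)
    {v : Fin n → R} {p : ℕ} (hv : ∀ i : Fin n, p < i → v i = 0) (k : ℕ) :
    ∀ i : Fin n, p + k < i → (H ^ k *ᵥ v) i = 0 := by
  induction k with
  | zero => simpa using hv
  | succ k ih =>
    rw [pow_succ', ← mulVec_mulVec]
    exact hessenberg_mulVec_apply_eq_zero hH ih

end Hessenberg

lemma add_pow_mulVec_eq_pow_mulVec {ι R : Type*} [Fintype ι] [DecidableEq ι] [Semiring R]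
    {A B : Matrix ι ι R} {v : ι → R} {n : ℕ} (hB : ∀ k < n, B *ᵥ (A ^ k *ᵥ v) = 0) :
    (A + B) ^ n *ᵥ v = A ^ n *ᵥ v := by
  induction n with
  | zero => rfl
  | succ n ih =>
    rw [pow_succ', pow_succ', ← mulVec_mulVec, ← mulVec_mulVec,
      ih fun k hk => hB k (by omega), add_mulVec, hB n n.lt_succ_self, add_zero]

lemma of_ite_col_mulVec {ι R : Type*} [Fintype ι] [DecidableEq ι] [NonUnitalNonAssocSemiring R]
    (c : ι) (u w : ι → R) :
    (of fun i j => if j = c then u i else 0) *ᵥ w = fun i => u i * w c := by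
  ext i
  simp [mulVec, dotProduct, ite_mul]

theorem stmt_14_general (m : ℕ) (H : Matrix (Fin (m + 1)) (Fin (m + 1)) ℂ)
    (hhess : ∀ i j : Fin (m + 1), (j : ℕ) + 1 < (i : ℕ) → H i j = 0)
    (Mvec : Fin (m + 1) → ℂ)
    (M : Matrix (Fin (m + 1)) (Fin (m + 1)) ℂ)
    (hM : M = Matrix.of fun i j => if j = Fin.last m then Mvec i else 0) :
    ∀ i : ℕ, i ≤ m →
      ((H + M) ^ i) *ᵥ Pi.single (0 : Fin (m + 1)) (1 : ℂ)
        = (H ^ i) *ᵥ Pi.single (0 : Fin (m + 1)) (1 : ℂ) := by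
  intro i hi
  refine add_pow_mulVec_eq_pow_mulVec fun k hk => ?_
  have e₁_support : ∀ j : Fin (m + 1), 0 < (j : ℕ) → (Pi.single 0 1 : Fin (m + 1) → ℂ) j = 0 :=
    fun j hj => Pi.single_eq_of_ne (Fin.pos_iff_ne_zero.mp hj) _
  have last_eq_zero : (H ^ k *ᵥ Pi.single 0 (1 : ℂ)) (Fin.last m) = 0 :=
    hessenberg_pow_mulVec_apply_eq_zero hhess e₁_support k _ (by simp only [zero_add, Fin.val_last]; omega)
  rw [hM, of_ite_col_mulVec, last_eq_zero]
  exact funext fun _ => mul_zero _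

/-- For an unreduced upper Hessenberg `H` of size `m+1` and a last-column rank-one
modification `M = M_vec e_m*`, the Krylov vectors agree: `(H+M)^i e₁ = H^i e₁` for
`i ≤ m`. -/
theorem stmt_14 (m : ℕ) (H : Matrix (Fin (m + 1)) (Fin (m + 1)) ℂ)
    (hhess : ∀ i j : Fin (m + 1), (j : ℕ) + 1 < (i : ℕ) → H i j = 0)
    (hunred : ∀ j : Fin m, H j.succ j.castSucc ≠ 0)
    (Mvec : Fin (m + 1) → ℂ)
    (M : Matrix (Fin (m + 1)) (Fin (m + 1)) ℂ)
    (hM : M = Matrix.of fun i j => if j = Fin.last m then Mvec i else 0) :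
    ∀ i : ℕ, i ≤ m →
      ((H + M) ^ i) *ᵥ Pi.single (0 : Fin (m + 1)) (1 : ℂ)
        = (H ^ i) *ᵥ Pi.single (0 : Fin (m + 1)) (1 : ℂ) :=
  stmt_14_general m H hhess Mvec M hM
end
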